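/- arXiv:1205.3735 — 2 statements merged into one kernel-verified Lean document; each statement's English description precedes it below -/
import Mathlib

section
/- Let G be a closed diamond (a square with sides at angle π/4 to the coordinate axes) with vertices x₁, x₂ = x₁ + r(1,1), x₃ = x₁ + r(1,−1), x₄ = x₁ + r(2,0) for some r > 0. Let C be the union of the three closed segments [x₁,x₃], [x₂,x₄], and [(x₁+x₂)/2, (x₃+x₄)/2]. Then for every θ ∈ (0, arctan(1/3)), the orthogonal projection of C onto the line K_θ equals the orthogonal projection of G onto K_θ. -/
/-!
Write the diamond as the convex hull of `x, x + u ± v, x + 2u` and let `φ` be a linear functional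
with `3 |φ v| ≤ φ u`. Then `φ` maps the diamond onto `[φ x, φ x + 2 φ u]`. The outer teeth of the
comb cover `[φ x, φ x + φ u - φ v]` and `[φ x + φ u + φ v, φ x + 2 φ u]`, and the middle tooth
covers `[φ x + (φ u + φ v) / 2, φ x + (3 φ u - φ v) / 2]`, which bridges the gap between them
because `3 φ v ≤ φ u`. For the projection onto `K_θ` with `u = r`, `v = r i` the condition
reads `3 |sin θ| ≤ cos θ`, i.e. `|tan θ| ≤ 1 / 3`.
-/

open MeasureTheory Set Real

/-- Scalar orthogonal projection onto the line `K_θ = {r·e^{iθ}}`. -/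
noncomputable def proj (θ : ℝ) (A : Set ℂ) : Set ℝ :=
  (fun z : ℂ => (z * Complex.exp (-(θ : ℂ) * Complex.I)).re) '' A

theorem Set.Icc_subset_Icc_union_Icc_union_Icc {a b p q u v : ℝ} (hup : u ≤ p) (hqv : q ≤ v) :
    Icc a b ⊆ Icc a p ∪ Icc q b ∪ Icc u v := by
  rintro x ⟨hax, hxb⟩
  by_cases hxp : x ≤ p
  · exact Or.inl (Or.inl ⟨hax, hxp⟩)
  by_cases hqx : q ≤ x
  · exact Or.inl (Or.inr ⟨hqx, hxb⟩)
  exact Or.inr ⟨by linarith, by linarith⟩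

section Comb

variable {E : Type*} [AddCommGroup E] [Module ℝ E]

def diamond (x u v : E) : Set E :=
  convexHull ℝ {x, x + u + v, x + u - v, x + 2 • u}

def comb (x u v : E) : Set E :=
  segment ℝ x (x + u - v) ∪ segment ℝ (x + u + v) (x + 2 • u) ∪
    segment ℝ (midpoint ℝ x (x + u + v)) (midpoint ℝ (x + u - v) (x + 2 • u))

theorem comb_subset_diamond (x u v : E) : comb x u v ⊆ diamond x u v := by
  have hull : Convex ℝ (diamond x u v) := convex_convexHull ℝ _
  have h₁ : x ∈ diamond x u v := subset_convexHull ℝ _ (by simp)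
  have h₂ : x + u + v ∈ diamond x u v := subset_convexHull ℝ _ (by simp)
  have h₃ : x + u - v ∈ diamond x u v := subset_convexHull ℝ _ (by simp)
  have h₄ : x + 2 • u ∈ diamond x u v := subset_convexHull ℝ _ (by simp)
  refine union_subset (union_subset (hull.segment_subset h₁ h₃) (hull.segment_subset h₂ h₄))
    (hull.segment_subset ?_ ?_)
  · exact hull.segment_subset h₁ h₂ (midpoint_mem_segment _ _)
  · exact hull.segment_subset h₃ h₄ (midpoint_mem_segment _ _)

theorem image_comb_eq_image_diamond (φ : E →ₗ[ℝ] ℝ) (x u v : E) (hφ : 3 * |φ v| ≤ φ u) :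
    φ '' comb x u v = φ '' diamond x u v := by
  refine (image_mono (comb_subset_diamond x u v)).antisymm ?_
  have hv₁ := neg_abs_le (φ v)
  have hv₂ := le_abs_self (φ v)
  have seg (y z : E) : φ '' segment ℝ y z = segment ℝ (φ y) (φ z) :=
    image_segment ℝ φ.toAffineMap y z
  have mid (y z : E) : φ (midpoint ℝ y z) = (φ y + φ z) / 2 := by
    rw [midpoint_eq_smul_add, map_smul, map_add, smul_eq_mul, invOf_eq_inv]; ring
  calc φ '' diamond x u v
      = convexHull ℝ (φ '' {x, x + u + v, x + u - v, x + 2 • u}) := φ.image_convexHull _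
    _ ⊆ Icc (φ x) (φ x + 2 * φ u) := by
      refine convexHull_min ?_ (convex_Icc _ _)
      simp only [image_insert_eq, image_singleton, map_add, map_sub, map_nsmul, nsmul_eq_mul,
        insert_subset_iff, singleton_subset_iff, mem_Icc]
      refine ⟨⟨?_, ?_⟩, ⟨?_, ?_⟩, ⟨?_, ?_⟩, ⟨?_, ?_⟩⟩ <;> push_cast <;> linarith
    _ ⊆ Icc (φ x) (φ x + φ u - φ v) ∪ Icc (φ x + φ u + φ v) (φ x + 2 * φ u) ∪
          Icc ((φ x + (φ x + φ u + φ v)) / 2) ((φ x + φ u - φ v + (φ x + 2 * φ u)) / 2) :=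
      Icc_subset_Icc_union_Icc_union_Icc (by linarith) (by linarith)
    _ ⊆ φ '' comb x u v := by
      simp only [comb, image_union, seg, mid, map_add, map_sub, map_nsmul, nsmul_eq_mul]
      push_cast
      exact union_subset_union (union_subset_union Icc_subset_segment Icc_subset_segment)
        Icc_subset_segment

end Comb

noncomputable def projLm (θ : ℝ) : ℂ →ₗ[ℝ] ℝ :=
  cos θ • Complex.reLm + sin θ • Complex.imLm

@[simp]
theorem projLm_apply (θ : ℝ) (z : ℂ) : projLm θ z = z.re * cos θ + z.im * sin θ := by
  simp [projLm, mul_comm]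

theorem proj_eq_image_projLm (θ : ℝ) (A : Set ℂ) : proj θ A = projLm θ '' A := by
  refine image_congr fun z _ => ?_
  rw [projLm_apply, ← Complex.ofReal_neg, Complex.mul_re,
    Complex.exp_ofReal_mul_I_re, Complex.exp_ofReal_mul_I_im, cos_neg, sin_neg]
  ring

theorem three_mul_sin_le_cos_of_le_arctan {θ : ℝ} (h₀ : 0 ≤ θ) (h : θ ≤ arctan (1 / 3)) :
    3 * sin θ ≤ cos θ := by
  have hθ : θ < π / 2 := h.trans_lt (arctan_lt_pi_div_two _)
  have hcos : 0 < cos θ := cos_pos_of_mem_Ioo ⟨by linarith [pi_pos], hθ⟩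
  have htan : tan θ ≤ 1 / 3 := by
    rw [← arctan_tan (by linarith [pi_pos]) hθ] at h
    exact arctan_le_arctan_iff.mp h
  rw [tan_eq_sin_div_cos, div_le_iff₀ hcos] at htan
  linarith

theorem stmt3 (x₁ x₂ x₃ x₄ : ℂ) (r : ℝ) (hr : 0 < r)
    (h2 : x₂ = x₁ + r * (1 + Complex.I)) (h3 : x₃ = x₁ + r * (1 - Complex.I))
    (h4 : x₄ = x₁ + 2 * r)
    (G C : Set ℂ) (hG : G = convexHull ℝ {x₁, x₂, x₃, x₄})
    (hC : C = segment ℝ x₁ x₃ ∪ segment ℝ x₂ x₄ ∪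
      segment ℝ ((x₁ + x₂) / 2) ((x₃ + x₄) / 2))
    (θ : ℝ) (hθ : θ ∈ Ioo 0 (Real.arctan (1 / 3))) :
    proj θ C = proj θ G := by
  have half (y z : ℂ) : (y + z) / 2 = midpoint ℝ y z := by
    rw [midpoint_eq_smul_add, invOf_eq_inv, Complex.real_smul]; push_cast; ring
  have hx₂ : x₂ = x₁ + r + r * Complex.I := by rw [h2]; ring
  have hx₃ : x₃ = x₁ + r - r * Complex.I := by rw [h3]; ring
  have hx₄ : x₄ = x₁ + 2 • (r : ℂ) := by rw [h4, two_nsmul]; ring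
  rw [hC, hG, half, half, hx₂, hx₃, hx₄, proj_eq_image_projLm, proj_eq_image_projLm]
  refine image_comb_eq_image_diamond (projLm θ) x₁ r (r * Complex.I) ?_
  have hsin : 0 ≤ sin θ := sin_nonneg_of_nonneg_of_le_pi hθ.1.le
    (by linarith [hθ.2, arctan_lt_pi_div_two (1 / 3), pi_pos])
  have hcos := three_mul_sin_le_cos_of_le_arctan hθ.1.le hθ.2.le
  simp only [projLm_apply, Complex.ofReal_re, Complex.ofReal_im, Complex.mul_re, Complex.mul_im,
    Complex.I_re, Complex.I_im, mul_zero, zero_mul, mul_one, sub_zero, add_zero, zero_add]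
  rw [abs_of_nonneg (mul_nonneg hr.le hsin)]
  linarith [mul_le_mul_of_nonneg_left hcos hr.le]
end

section
/- For every n ≥ 1 and every permutation s = (j₁, …, j_n) of {1, …, n}, consider the rhombus Z with sides on the lines K₀, K₀ + (0,1), K_θ, and K_θ + e^{i(θ+π/2)} (where θ ∈ (0,π)), and for a set A ⊆ ℝ² define M_{n,s,k}(A) = (1/n)A − ((k−1)/n)·(1/sin θ, 0) + ((j_k−1)/n)·(e^{iθ}/sin θ) for 1 ≤ k ≤ n, and M_{n,s}(A) = ⋃_{k=1}^n M_{n,s,k}(A). Then the composition M_{n₁,s₁}(M_{n₂,s₂}(Z)) equals M_{n₃,s₃}(Z) for n₃ = n₁n₂ and some permutation s₃ of {1, …, n₃}. -/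
open MeasureTheory Set Real

/-- The rhombus `Z` bounded by the lines `K₀`, `K₀ + (0,1)`, `K_θ` and
`K_θ + e^{i(θ+π/2)}`; parametrized by the height coordinate and the signed
distance from `K_θ`. -/
noncomputable def Zrh (θ : ℝ) : Set ℂ :=
  {z : ℂ | ∃ s ∈ Icc (0 : ℝ) 1, ∃ t ∈ Icc (0 : ℝ) 1,
    z = (-(s : ℂ) + (t : ℂ) * Complex.exp ((θ : ℂ) * Complex.I)) / (Real.sin θ : ℂ)}

/-- The `k`-th scaled translated copy `M_{n,s,k}(A) = (1/n)A − (k/n)(1/sin θ)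
+ (s(k)/n)(e^{iθ}/sin θ)` (indices `0,…,n−1`). -/
noncomputable def Mk (θ : ℝ) (n : ℕ) (s : Equiv.Perm (Fin n)) (k : Fin n)
    (A : Set ℂ) : Set ℂ :=
  (fun z : ℂ => z / (n : ℂ) - ((k : ℕ) : ℂ) / (n : ℂ) * (1 / (Real.sin θ : ℂ))
      + ((s k : ℕ) : ℂ) / (n : ℂ) *
        (Complex.exp ((θ : ℂ) * Complex.I) / (Real.sin θ : ℂ))) '' A

/-- `M_{n,s}(A) = ⋃ₖ M_{n,s,k}(A)`. -/
noncomputable def MM (θ : ℝ) (n : ℕ) (s : Equiv.Perm (Fin n)) (A : Set ℂ) : Set ℂ :=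
  ⋃ k, Mk θ n s k A

/-!
Each `M_{n,s,k}` is the homothety `z ↦ z / n` followed by a translation. Composing the
`k₁`-th map of `M_{n₁,s₁}` with the `k₂`-th map of `M_{n₂,s₂}` gives the homothety
`z ↦ z / (n₁ n₂)` followed by the translation of index `k₂ + n₂ k₁`, shuffled to
`s₂ k₂ + n₂ s₁ k₁`. In mixed radix `(n₁, n₂)` this is the permutation `s₁ × s₂` of
`Fin n₁ × Fin n₂ ≃ Fin (n₁ n₂)`.
-/

theorem Mk_Mk (θ : ℝ) {n₁ n₂ : ℕ} (s₁ : Equiv.Perm (Fin n₁)) (s₂ : Equiv.Perm (Fin n₂))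
    (k₁ : Fin n₁) (k₂ : Fin n₂) (A : Set ℂ) :
    Mk θ n₁ s₁ k₁ (Mk θ n₂ s₂ k₂ A) =
      Mk θ (n₁ * n₂) (finProdFinEquiv.permCongr (s₁.prodCongr s₂))
        (finProdFinEquiv (k₁, k₂)) A := by
  have hn₁ : (n₁ : ℂ) ≠ 0 := Nat.cast_ne_zero.2 k₁.pos.ne'
  have hn₂ : (n₂ : ℂ) ≠ 0 := Nat.cast_ne_zero.2 k₂.pos.ne'
  simp only [Mk, image_image, Equiv.permCongr_apply, Equiv.symm_apply_apply,
    Equiv.prodCongr_apply, Prod.map, finProdFinEquiv_apply_val]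
  refine image_congr fun z _ => ?_
  push_cast
  field_simp
  ring

theorem MM_MM (θ : ℝ) {n₁ n₂ : ℕ} (s₁ : Equiv.Perm (Fin n₁)) (s₂ : Equiv.Perm (Fin n₂))
    (A : Set ℂ) :
    MM θ n₁ s₁ (MM θ n₂ s₂ A) =
      MM θ (n₁ * n₂) (finProdFinEquiv.permCongr (s₁.prodCongr s₂)) A := by
  calc MM θ n₁ s₁ (MM θ n₂ s₂ A)
      = ⋃ p : Fin n₁ × Fin n₂, Mk θ n₁ s₁ p.1 (Mk θ n₂ s₂ p.2 A) := by
        simp only [MM, Mk, image_iUnion, iUnion_prod']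
    _ = _ := by
        simp only [Mk_Mk]
        exact finProdFinEquiv.surjective.iUnion_comp (fun k => Mk θ _ _ k A)

theorem stmt6_general (θ : ℝ) (n₁ n₂ : ℕ)
    (s₁ : Equiv.Perm (Fin n₁)) (s₂ : Equiv.Perm (Fin n₂)) :
    ∃ s₃ : Equiv.Perm (Fin (n₁ * n₂)),
      MM θ n₁ s₁ (MM θ n₂ s₂ (Zrh θ)) = MM θ (n₁ * n₂) s₃ (Zrh θ) :=
  ⟨_, MM_MM θ s₁ s₂ (Zrh θ)⟩

theorem stmt6 (θ : ℝ) (hθ : θ ∈ Ioo 0 π) (n₁ n₂ : ℕ) (hn₁ : 1 ≤ n₁) (hn₂ : 1 ≤ n₂)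
    (s₁ : Equiv.Perm (Fin n₁)) (s₂ : Equiv.Perm (Fin n₂)) :
    ∃ s₃ : Equiv.Perm (Fin (n₁ * n₂)),
      MM θ n₁ s₁ (MM θ n₂ s₂ (Zrh θ)) = MM θ (n₁ * n₂) s₃ (Zrh θ) :=
  stmt6_general θ n₁ n₂ s₁ s₂
end
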